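/- Let α, β, γ₀ ∈ ℂ and q(z) = z³ + α z² + β z + γ₀. There exist real constants R > 0 and M > 0 such that for every z ∈ ℂ with |z| > R and every s ∈ ℂ satisfying s² = q(z)/z and |s − z| ≤ |z|/2, one has |s − z − α/2 + (α² − 4β)/(8z)| ≤ M/|z|². (Equivalently, the branch of √(q(z)/z) asymptotic to z at infinity has Laurent expansion z + α/2 − (α² − 4β)/(8z) + O(z⁻²), so its residue at infinity is (α² − 4β)/8.) -/

import Mathlib

/-!
Put `c = (α² - 4β)/8` and `t = z + α/2 - c/z`. Expanding `t²` shows that `q(z)/z - t²` is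
`(γ₀ + αc)/z - c²/z²`, which is `O(1/|z|)`. On the branch with `|s - z| ≤ |z|/2` the other
factor of `s² - t² = (s - t)(s + t)` satisfies `|s + t| ≥ |z|/2`, so `|s - t| = O(1/|z|²)`.
-/

lemma norm_sub_le_norm_sq_sub_div {K : Type*} [NormedField K] {s t : K} {m : ℝ} (hm : 0 < m)
    (hst : m ≤ ‖s + t‖) : ‖s - t‖ ≤ ‖s ^ 2 - t ^ 2‖ / m := by
  rw [le_div_iff₀ hm, show s ^ 2 - t ^ 2 = (s - t) * (s + t) by ring, norm_mul]
  exact mul_le_mul_of_nonneg_left hst (norm_nonneg _)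

lemma norm_div_le_of_one_le_norm {K : Type*} [NormedField K] (a : K) {z : K}
    (hz : 1 ≤ ‖z‖) : ‖a / z‖ ≤ ‖a‖ := by
  rw [norm_div]
  exact div_le_self (norm_nonneg a) hz

lemma norm_div_sub_div_sq_le {K : Type*} [NormedField K] (a b : K) {z : K} (hz : 1 ≤ ‖z‖) :
    ‖a / z - b / z ^ 2‖ ≤ (‖a‖ + ‖b‖) / ‖z‖ := by
  have hz0 : 0 < ‖z‖ := by linarith
  have hb : ‖b / z ^ 2‖ ≤ ‖b‖ / ‖z‖ := by
    rw [norm_div, norm_pow]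
    exact div_le_div_of_nonneg_left (norm_nonneg b) hz0 (by nlinarith)
  calc ‖a / z - b / z ^ 2‖ ≤ ‖a / z‖ + ‖b / z ^ 2‖ := norm_sub_le _ _
    _ ≤ ‖a‖ / ‖z‖ + ‖b‖ / ‖z‖ := by rw [norm_div a z]; gcongr
    _ = (‖a‖ + ‖b‖) / ‖z‖ := by ring

lemma half_norm_le_norm_add_add {E : Type*} [NormedAddCommGroup E] [NormedSpace ℝ E]
    {s z u : E} (hs : ‖s - z‖ ≤ ‖z‖ / 2) (hu : ‖u‖ ≤ ‖z‖) : ‖z‖ / 2 ≤ ‖s + (z + u)‖ := by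
  have hdecomp : (2 : ℝ) • z = s + (z + u) - (s - z) - u := by rw [two_smul]; abel
  have : 2 * ‖z‖ ≤ ‖s + (z + u)‖ + ‖s - z‖ + ‖u‖ :=
    calc 2 * ‖z‖ = ‖(2 : ℝ) • z‖ := by rw [norm_smul, Real.norm_two]
      _ ≤ ‖s + (z + u) - (s - z)‖ + ‖u‖ := by rw [hdecomp]; exact norm_sub_le _ _
      _ ≤ ‖s + (z + u)‖ + ‖s - z‖ + ‖u‖ := by gcongr; exact norm_sub_le _ _
  linarith

lemma cubic_div_sub_sq {α β γ₀ c z : ℂ} (hc : 8 * c = α ^ 2 - 4 * β) (hz : z ≠ 0) :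
    (z ^ 3 + α * z ^ 2 + β * z + γ₀) / z - (z + (α / 2 - c / z)) ^ 2
      = (γ₀ + α * c) / z - c ^ 2 / z ^ 2 := by
  obtain rfl : β = (α ^ 2 - 8 * c) / 4 := by linear_combination hc / 4
  field_simp
  ring

/-- The branch of `√(q(z)/z)` asymptotic to `z` at infinity (singled out by the condition
`|s - z| ≤ |z|/2`) has Laurent expansion `z + α/2 - (α² - 4β)/(8z) + O(z⁻²)`. -/
theorem stmt_2 (α β γ₀ : ℂ) :
    ∃ R > (0 : ℝ), ∃ M > (0 : ℝ), ∀ z s : ℂ,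
      ‖z‖ > R →
      s ^ 2 = (z ^ 3 + α * z ^ 2 + β * z + γ₀) / z →
      ‖s - z‖ ≤ ‖z‖ / 2 →
      ‖s - z - α / 2 + (α ^ 2 - 4 * β) / (8 * z)‖ ≤ M / (‖z‖) ^ 2 := by
  set c : ℂ := (α ^ 2 - 4 * β) / 8 with hc
  set A : ℝ := ‖γ₀ + α * c‖ + ‖c ^ 2‖
  refine ⟨1 + ‖α‖ + ‖c‖, by positivity, 2 * A + 1, by positivity, fun z s hz hs hsz => ?_⟩
  have hz1 : 1 ≤ ‖z‖ := by linarith [norm_nonneg α, norm_nonneg c]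
  have hz0 : 0 < ‖z‖ := by linarith
  set t := z + (α / 2 - c / z)
  have hdiff : s - z - α / 2 + (α ^ 2 - 4 * β) / (8 * z) = s - t := by
    simp only [t, hc]
    field_simp
    ring
  have hsq : s ^ 2 - t ^ 2 = (γ₀ + α * c) / z - c ^ 2 / z ^ 2 := by
    rw [hs]
    exact cubic_div_sub_sq (by rw [hc]; ring) (norm_pos_iff.mp hz0)
  have hu : ‖α / 2 - c / z‖ ≤ ‖z‖ := by
    calc ‖α / 2 - c / z‖ ≤ ‖α / 2‖ + ‖c / z‖ := norm_sub_le _ _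
      _ ≤ ‖α‖ + ‖c‖ := by
          gcongr
          · exact norm_div_le_of_one_le_norm α (by norm_num)
          · exact norm_div_le_of_one_le_norm c hz1
      _ ≤ ‖z‖ := by linarith
  rw [hdiff]
  calc ‖s - t‖ ≤ ‖s ^ 2 - t ^ 2‖ / (‖z‖ / 2) :=
        norm_sub_le_norm_sq_sub_div (by positivity) (half_norm_le_norm_add_add hsz hu)
    _ ≤ A / ‖z‖ / (‖z‖ / 2) := by
        rw [hsq]
        gcongr
        exact norm_div_sub_div_sq_le _ _ hz1
    _ = 2 * A / ‖z‖ ^ 2 := by field_simp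
    _ ≤ (2 * A + 1) / ‖z‖ ^ 2 := by gcongr; linarith
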